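/- arXiv:1805.07898 — 2 statements merged into one kernel-verified Lean document; each statement's English description precedes it below -/
import Mathlib

section
/- Let m ≥ 1, let a > 0, let C : ℝ^m → ℝ be continuous, let w_f ∈ ℝ^m, and fix a coordinate index i ∈ {1,…,m}. Suppose the two slices of C at ℓ∞-distance a from w_f in the i-th coordinate agree: for every vector u in the (m−1)-dimensional closed ℓ∞-box of radius a centered at (w_f)_{\i}, the value of C at the point with i-th coordinate (w_f)_i + a and remaining coordinates u equals the value of C at the point with i-th coordinate (w_f)_i − a and remaining coordinates u. Then the partial derivative of the smoothed function C̄ in the i-th coordinate direction at w_f is zero. -/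
open MeasureTheory

noncomputable section

/-- The closed ℓ∞-box `D(w, ς)` of radius `ς` centered at `w`. -/
def box {m : ℕ} (w : Fin m → ℝ) (ς : ℝ) : Set (Fin m → ℝ) :=
  {w' | ∀ i, |w' i - w i| ≤ ς}

/-- The smoothed function `C̄(w) = (2a)^{-m} ∫_{D(w,a)} C(w') dw'`. -/
def smoothed {m : ℕ} (a : ℝ) (C : (Fin m → ℝ) → ℝ) (w : Fin m → ℝ) : ℝ :=
  ((2 * a) ^ m)⁻¹ * ∫ w' in box w a, C w'

/-- The point of `ℝ^m` whose `i`-th coordinate is `c` and whose remaining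
coordinates are given by `u`. -/
def insertAt {m : ℕ} (i : Fin m) (c : ℝ) (u : {j : Fin m // j ≠ i} → ℝ) :
    Fin m → ℝ :=
  fun j => if h : j = i then c else u ⟨j, h⟩

/-- The `(m-1)`-dimensional closed ℓ∞-box of radius `ς` centered at the vector of
the coordinates of `w` other than the `i`-th one. -/
def subBox {m : ℕ} (i : Fin m) (w : Fin m → ℝ) (ς : ℝ) :
    Set ({j : Fin m // j ≠ i} → ℝ) :=
  {u | ∀ j : {j : Fin m // j ≠ i}, |u j - w j.1| ≤ ς}

/-! By Fubini along the `i`-th coordinate, the box integral at `w_f` moved to `t` in that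
coordinate is `∫_{t-a}^{t+a} g`, where `g c` is the integral of `C` over the slice `x_i = c` of
the box; the slice box does not move with `t`. By the fundamental theorem of calculus the
derivative at `t = w_f i` is therefore proportional to `g (w_f i + a) - g (w_f i - a)`, the
difference of the integrals over the two boundary slices, which vanishes by hypothesis. -/

section Slices

variable {m : ℕ} (i : Fin m)

lemma box_eq_pi (w : Fin m → ℝ) (ς : ℝ) :
    box w ς = Set.univ.pi fun j => Set.Icc (w j - ς) (w j + ς) := by
  ext x
  simp only [box, Set.mem_ofPred_eq, Set.mem_pi, Set.mem_univ, true_implies]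
  exact forall_congr' fun j => by rw [abs_sub_comm, Set.mem_Icc_iff_abs_le]

lemma subBox_eq_pi (w : Fin m → ℝ) (ς : ℝ) :
    subBox i w ς = Set.univ.pi fun j => Set.Icc (w j.1 - ς) (w j.1 + ς) := by
  ext u
  simp only [subBox, Set.mem_ofPred_eq, Set.mem_pi, Set.mem_univ, true_implies]
  exact forall_congr' fun j => by rw [abs_sub_comm, Set.mem_Icc_iff_abs_le]

lemma isCompact_box (w : Fin m → ℝ) (ς : ℝ) : IsCompact (box w ς) := by
  rw [box_eq_pi]
  exact isCompact_univ_pi fun _ => isCompact_Icc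

lemma isCompact_subBox (w : Fin m → ℝ) (ς : ℝ) : IsCompact (subBox i w ς) := by
  rw [subBox_eq_pi]
  exact isCompact_univ_pi fun _ => isCompact_Icc

lemma subBox_update_self (w : Fin m → ℝ) (t ς : ℝ) :
    subBox i (Function.update w i t) ς = subBox i w ς := by
  ext u
  exact forall_congr' fun j => by rw [Function.update_of_ne j.2]

def insertAtHomeomorph : ℝ × ({j : Fin m // j ≠ i} → ℝ) ≃ₜ (Fin m → ℝ) :=
  (Homeomorph.funSplitAt ℝ i).symm

lemma insertAtHomeomorph_apply (z : ℝ × ({j : Fin m // j ≠ i} → ℝ)) :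
    insertAtHomeomorph i z = insertAt i z.1 z.2 := by
  funext j
  simp [insertAtHomeomorph, insertAt]

lemma insertAtHomeomorph_preimage_pi (s : Fin m → Set ℝ) :
    insertAtHomeomorph i ⁻¹' Set.univ.pi s =
      s i ×ˢ Set.univ.pi fun j : {j // j ≠ i} => s j := by
  ext ⟨c, u⟩
  simp only [Set.mem_preimage, insertAtHomeomorph_apply, Set.mem_prod, Set.mem_pi, Set.mem_univ,
    true_implies]
  constructor
  · intro h
    exact ⟨by simpa [insertAt] using h i, fun j => by simpa [insertAt, j.2] using h j⟩
  · rintro ⟨hc, hu⟩ j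
    by_cases h : j = i
    · subst h
      simpa [insertAt] using hc
    · simpa [insertAt, h] using hu ⟨j, h⟩

lemma measurePreserving_insertAtHomeomorph :
    MeasurePreserving (insertAtHomeomorph i) (volume.prod volume) volume := by
  refine ⟨(insertAtHomeomorph i).continuous.measurable, (Measure.pi_eq fun s hs => ?_).symm⟩
  rw [Measure.map_apply (insertAtHomeomorph i).continuous.measurable (.univ_pi hs),
    insertAtHomeomorph_preimage_pi, Measure.prod_prod, volume_pi_pi,
    Fintype.prod_eq_mul_prod_subtype_ne _ i]

lemma insertAtHomeomorph_preimage_box (w : Fin m → ℝ) (ς : ℝ) :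
    insertAtHomeomorph i ⁻¹' box w ς = Set.Icc (w i - ς) (w i + ς) ×ˢ subBox i w ς := by
  rw [box_eq_pi, insertAtHomeomorph_preimage_pi, subBox_eq_pi]

theorem setIntegral_box_eq_integral_slices {E : Type*} [NormedAddCommGroup E] [NormedSpace ℝ E]
    {f : (Fin m → ℝ) → E} (w : Fin m → ℝ) (ς : ℝ) (hf : IntegrableOn f (box w ς)) :
    ∫ x in box w ς, f x =
      ∫ c in Set.Icc (w i - ς) (w i + ς), ∫ u in subBox i w ς, f (insertAt i c u) := by
  have he := measurePreserving_insertAtHomeomorph i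
  have hemb := (insertAtHomeomorph i).isClosedEmbedding.measurableEmbedding
  rw [← he.setIntegral_preimage_emb hemb, insertAtHomeomorph_preimage_box, setIntegral_prod]
  · simp only [insertAtHomeomorph_apply]
  · rw [← insertAtHomeomorph_preimage_box]
    exact (he.integrableOn_comp_preimage hemb).2 hf

end Slices

theorem hasDerivAt_integral_Icc_sub_add {E : Type*} [NormedAddCommGroup E] [NormedSpace ℝ E]
    [CompleteSpace E] {g : ℝ → E} (hg : Continuous g) {a : ℝ} (ha : 0 ≤ a) (x : ℝ) :
    HasDerivAt (fun t => ∫ c in Set.Icc (t - a) (t + a), g c) (g (x + a) - g (x - a)) x := by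
  have hprimitive : ∀ y, HasDerivAt (fun u => ∫ c in 0..u, g c) (g y) y := fun y =>
    (hg.integral_hasStrictDerivAt 0 y).hasDerivAt
  have hdiff : (fun t => ∫ c in Set.Icc (t - a) (t + a), g c) =
      fun t => (∫ c in 0..(t + a), g c) - ∫ c in 0..(t - a), g c := by
    funext t
    rw [integral_Icc_eq_integral_Ioc, ← intervalIntegral.integral_of_le (by linarith),
      intervalIntegral.integral_interval_sub_left (hg.intervalIntegrable _ _)
        (hg.intervalIntegrable _ _)]
  rw [hdiff]
  exact ((hprimitive _).comp_add_const x a).sub ((hprimitive _).comp_sub_const x a)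

theorem hasDerivAt_smoothed_coord_zero_of_slices_agree_general
    {m : ℕ} (a : ℝ) (ha : 0 < a)
    (C : (Fin m → ℝ) → ℝ) (hC : Continuous C)
    (w_f : Fin m → ℝ) (i : Fin m)
    (hslices : ∀ u ∈ subBox i w_f a,
      C (insertAt i (w_f i + a) u) = C (insertAt i (w_f i - a) u)) :
    HasDerivAt (fun t : ℝ => smoothed a C (Function.update w_f i t)) 0 (w_f i) := by
  set g : ℝ → ℝ := fun c => ∫ u in subBox i w_f a, C (insertAt i c u)
  have hg : Continuous g := by
    have hCz : Continuous fun z : ℝ × _ => C (insertAt i z.1 z.2) := by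
      simpa only [Function.comp_def, insertAtHomeomorph_apply] using
        hC.comp (insertAtHomeomorph i).continuous
    exact continuous_parametric_integral_of_continuous hCz (isCompact_subBox i w_f a)
  have hsmoothed : (fun t => smoothed a C (Function.update w_f i t)) =
      fun t => ((2 * a) ^ m)⁻¹ * ∫ c in Set.Icc (t - a) (t + a), g c := by
    funext t
    rw [smoothed, setIntegral_box_eq_integral_slices i _ _
      (hC.continuousOn.integrableOn_compact (isCompact_box _ _)), Function.update_self,
      subBox_update_self]
  have hg_eq : g (w_f i + a) = g (w_f i - a) :=
    setIntegral_congr_fun (isCompact_subBox i w_f a).measurableSet hslices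
  rw [hsmoothed]
  simpa only [hg_eq, sub_self, mul_zero] using
    (hasDerivAt_integral_Icc_sub_add hg ha.le (w_f i)).const_mul ((2 * a) ^ m)⁻¹

theorem hasDerivAt_smoothed_coord_zero_of_slices_agree
    {m : ℕ} (hm : 1 ≤ m) (a : ℝ) (ha : 0 < a)
    (C : (Fin m → ℝ) → ℝ) (hC : Continuous C)
    (w_f : Fin m → ℝ) (i : Fin m)
    (hslices : ∀ u ∈ subBox i w_f a,
      C (insertAt i (w_f i + a) u) = C (insertAt i (w_f i - a) u)) :
    HasDerivAt (fun t : ℝ => smoothed a C (Function.update w_f i t)) 0 (w_f i) :=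
  hasDerivAt_smoothed_coord_zero_of_slices_agree_general a ha C hC w_f i hslices
end
end

section
/- (Theorem 1, symmetry transfer) Let m ≥ 1, let 0 < a < τ, let C : ℝ^m → ℝ be integrable on bounded sets, and let w_f ∈ ℝ^m. Suppose C is point-symmetric about w_f on D(w_f, τ), i.e., C(w_f + v) = C(w_f − v) for all v ∈ ℝ^m with ‖v‖_∞ ≤ τ. Then the smoothed function C̄ is point-symmetric about w_f on D(w_f, τ − a): C̄(w_f + v) = C̄(w_f − v) for all v ∈ ℝ^m with ‖v‖_∞ ≤ τ − a. -/
open MeasureTheory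

noncomputable section

lemma box_measurable {m : ℕ} (w : Fin m → ℝ) (ς : ℝ) : MeasurableSet (box w ς) := by
  have : box w ς = ⋂ i, {w' : Fin m → ℝ | |w' i - w i| ≤ ς} := by
    ext x; simp [box, Set.mem_iInter]
  rw [this]
  exact MeasurableSet.iInter fun i =>
    measurableSet_le ((measurable_pi_apply i).sub measurable_const).abs measurable_const

theorem smoothed_symm_of_symm
    {m : ℕ} (hm : 1 ≤ m) (a τ : ℝ) (ha : 0 < a) (haτ : a < τ)
    (C : (Fin m → ℝ) → ℝ)
    (hC : ∀ s : Set (Fin m → ℝ), Bornology.IsBounded s → IntegrableOn C s)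
    (w_f : Fin m → ℝ)
    (hsym : ∀ v : Fin m → ℝ, (∀ i, |v i| ≤ τ) → C (w_f + v) = C (w_f - v)) :
    ∀ v : Fin m → ℝ, (∀ i, |v i| ≤ τ - a) →
      smoothed a C (w_f + v) = smoothed a C (w_f - v) := by
  intro v hv
  unfold smoothed
  congr 1
  set c : Fin m → ℝ := w_f + w_f with hc
  have hpre : (fun t : Fin m → ℝ => c - t) ⁻¹' (box (w_f - v) a) = box (w_f + v) a := by
    ext x
    simp only [Set.mem_preimage, box, Set.mem_setOf_eq, hc, Pi.sub_apply, Pi.add_apply, abs_le]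
    constructor <;> intro h i <;> obtain ⟨h1, h2⟩ := h i <;> constructor <;> linarith
  have hchg : ∫ w' in box (w_f - v) a, C w'
      = ∫ x in box (w_f + v) a, C (c - x) := by
    rw [← hpre]
    exact ((Measure.measurePreserving_sub_left volume c).setIntegral_preimage_emb
      (MeasurableEquiv.subLeft c).measurableEmbedding C _).symm
  rw [hchg]
  apply setIntegral_congr_fun (box_measurable _ _)
  intro x hx
  have hu : ∀ i, |(x - w_f) i| ≤ τ := by
    intro i
    have h1 : |x i - (w_f + v) i| ≤ a := hx i
    have h2 : |v i| ≤ τ - a := hv i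
    have : |x i - w_f i| ≤ |x i - (w_f + v) i| + |v i| := by
      have := abs_sub_abs_le_abs_sub (x i - w_f i) (v i)
      calc |x i - w_f i| = |(x i - (w_f + v) i) + v i| := by
            simp only [Pi.add_apply]; ring_nf
          _ ≤ |x i - (w_f + v) i| + |v i| := abs_add_le _ _
    simpa using this.trans (by linarith)
  have := hsym (x - w_f) hu
  have hx1 : w_f + (x - w_f) = x := by ring
  have hx2 : w_f - (x - w_f) = c - x := by rw [hc]; ring
  rw [hx1, hx2] at this
  simpa using this
end
end
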